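/- Define polynomials p_k by p₀(x) = 1/θ and the doubling recursion p_{2k−1}(x) = (2σ_k²/σ_{2k})·(2p_{k−1}(x) − x·p_{k−1}(x)²) for k a power of 2, where σ_k = T_k(σ). Then 1 − x·p_{2k−1}(x) = T_{2k}(σ − x/δ)/T_{2k}(σ), i.e. p_{2k−1} is the Chebyshev preconditioning polynomial of degree 2k−1. -/

import Mathlib

/-!
Writing `y = σ - x/δ`, the hypothesis on `p_{k-1}` says `T_k(y) = σ_k (1 - x p_{k-1}(x))`, and
`2 x p - x² p² = 1 - (1 - x p)²`. Hence `1 - x p_{2k-1}(x) = (2 T_k(y)² - 1)/σ_{2k}`, which is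
`T_{2k}(y)/σ_{2k}` by the doubling formula. The divisions are honest because `σ > 1` forces
`σ_k ≥ 1`, so `σ_k ≠ 0` and `σ_{2k} = 2σ_k² - 1 ≥ 1`.
-/

open Polynomial Polynomial.Chebyshev

theorem Polynomial.Chebyshev.eval_T_two_mul {R : Type*} [CommRing R] (n : ℤ) (y : R) :
    (T R (2 * n)).eval y = 2 * (T R n).eval y ^ 2 - 1 := by
  rw [T_mul, eval_comp, T_two]
  simp

theorem one_sub_mul_chebyshev_doubling {K : Type*} [Field K] {s t x p : K} (hs : s ≠ 0)
    (hs₂ : 2 * s ^ 2 - 1 ≠ 0) (hp : 1 - x * p = t / s) :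
    1 - x * (2 * s ^ 2 / (2 * s ^ 2 - 1) * (2 * p - x * p ^ 2)) =
      (2 * t ^ 2 - 1) / (2 * s ^ 2 - 1) := by
  have ht : t = s * (1 - x * p) := by rw [hp]; field_simp
  rw [ht]
  field_simp
  ring

theorem stmt_9_general (α β : ℝ) (hαβ : 0 < α) (hβ : α < β)
    (θ δ σ : ℝ) (hθ : θ = (α + β) / 2) (hδ : δ = (β - α) / 2) (hσ : σ = θ / δ)
    (k : ℕ)
    (σk σ2k : ℝ) (hσk : σk = (Polynomial.Chebyshev.T ℝ (k : ℤ)).eval σ)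
    (hσ2k : σ2k = (Polynomial.Chebyshev.T ℝ (2 * (k : ℤ))).eval σ)
    (pk1 p2k1 : ℝ → ℝ)
    (hpk1 : ∀ x, 1 - x * pk1 x =
      (Polynomial.Chebyshev.T ℝ (k : ℤ)).eval (σ - x / δ) / σk)
    (hdef : ∀ x, p2k1 x = (2 * σk ^ 2 / σ2k) * (2 * pk1 x - x * (pk1 x) ^ 2)) :
    ∀ x, 1 - x * p2k1 x =
      (Polynomial.Chebyshev.T ℝ (2 * (k : ℤ))).eval (σ - x / δ) / σ2k := by
  intro x
  have hδ_pos : 0 < δ := by rw [hδ]; linarith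
  have hσ_ge : 1 ≤ σ := by rw [hσ, le_div_iff₀ hδ_pos, hθ, hδ]; linarith
  have hσk_ge : 1 ≤ σk := hσk ▸ one_le_eval_T_real _ hσ_ge
  have hσ2k_eq : σ2k = 2 * σk ^ 2 - 1 := by rw [hσ2k, hσk, eval_T_two_mul]
  rw [hdef, eval_T_two_mul, hσ2k_eq]
  exact one_sub_mul_chebyshev_doubling (by positivity) (by nlinarith) (hpk1 x)

/-- One doubling step: if `p_{k-1}` is the Chebyshev preconditioning polynomial
of degree `k-1` (i.e. `1 - x p_{k-1}(x) = T_k(σ - x/δ)/T_k(σ)`), then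
`p_{2k-1}(x) = (2σ_k²/σ_{2k})(2p_{k-1}(x) - x p_{k-1}(x)²)` satisfies
`1 - x p_{2k-1}(x) = T_{2k}(σ - x/δ)/T_{2k}(σ)`. -/
theorem stmt_9 (α β : ℝ) (hαβ : 0 < α) (hβ : α < β)
    (θ δ σ : ℝ) (hθ : θ = (α + β) / 2) (hδ : δ = (β - α) / 2) (hσ : σ = θ / δ)
    (k : ℕ) (hk : 1 ≤ k)
    (σk σ2k : ℝ) (hσk : σk = (Polynomial.Chebyshev.T ℝ (k : ℤ)).eval σ)
    (hσ2k : σ2k = (Polynomial.Chebyshev.T ℝ (2 * (k : ℤ))).eval σ)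
    (pk1 p2k1 : ℝ → ℝ)
    (hpk1 : ∀ x, 1 - x * pk1 x =
      (Polynomial.Chebyshev.T ℝ (k : ℤ)).eval (σ - x / δ) / σk)
    (hdef : ∀ x, p2k1 x = (2 * σk ^ 2 / σ2k) * (2 * pk1 x - x * (pk1 x) ^ 2)) :
    ∀ x, 1 - x * p2k1 x =
      (Polynomial.Chebyshev.T ℝ (2 * (k : ℤ))).eval (σ - x / δ) / σ2k :=
  stmt_9_general α β hαβ hβ θ δ σ hθ hδ hσ k σk σ2k hσk hσ2k pk1 p2k1 hpk1 hdef
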